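/- Leading term of the rescaled operator: assume all B_{jk} and V are bounded on ℝ^d together with all their partial derivatives. Fix a smooth compactly supported u : ℝ^d → ℂ. For x₀ ∈ ℝ^d let A^{(x₀)}_j(x₀ + Z) = Σ_k ( ∫₀¹ B_{kj}(x₀ + τZ)·τ dτ )·Z_k be the transverse-gauge potential, and for t ∈ (0,1] define the rescaled operator ℋ_{t,x₀}u(Z) = Σ_{j=1}^d ( (1/i)∂/∂Z_j − t^{-1}A^{(x₀)}_j(x₀ + tZ) )² u(Z) + V(x₀ + tZ)·u(Z), and the model operator ℋ^{(x₀)}u(Z) = Σ_{j=1}^d ( (1/i)∂/∂Z_j − (1/2)Σ_k B_{kj}(x₀)Z_k )² u(Z) + V(x₀)·u(Z). Then there is a constant C > 0, depending on u and on the bounds for B, V and their derivatives but not on x₀ or t, such that sup_{Z ∈ ℝ^d} | ℋ_{t,x₀}u(Z) − ℋ^{(x₀)}u(Z) | ≤ C·t for all x₀ ∈ ℝ^d and t ∈ (0,1]. -/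

import Mathlib

open MeasureTheory Filter

noncomputable section

/-- Euclidean space `ℝ^d`. -/
abbrev Rd (d : ℕ) : Type := EuclideanSpace ℝ (Fin d)

/-- Partial derivative in the `j`-th coordinate direction. -/
def pd {d : ℕ} {E : Type*} [NormedAddCommGroup E] [NormedSpace ℝ E]
    (j : Fin d) (f : Rd d → E) (x : Rd d) : E :=
  fderiv ℝ f x (EuclideanSpace.single j 1)

/-- The magnetic field `B_{jk} = ∂_j A_k - ∂_k A_j`. -/
def magField {d : ℕ} (A : Fin d → Rd d → ℝ) (j k : Fin d) (x : Rd d) : ℝ :=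
  pd j (A k) x - pd k (A j) x

/-- The magnetic covariant derivative `(ℏ/i) ∂_j - A_j`. -/
def magD {d : ℕ} (ℏ : ℝ) (A : Fin d → Rd d → ℝ) (j : Fin d) (u : Rd d → ℂ) (x : Rd d) : ℂ :=
  (ℏ : ℂ) / Complex.I * pd j u x - (A j x : ℂ) * u x

/-- The semiclassical magnetic Schrödinger operator
`H_ℏ u = Σ_j ((ℏ/i)∂_j - A_j)² u + ℏ V u`. -/
def schrodinger {d : ℕ} (ℏ : ℝ) (A : Fin d → Rd d → ℝ) (V : Rd d → ℝ)
    (u : Rd d → ℂ) (x : Rd d) : ℂ :=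
  ∑ j, magD ℏ A j (magD ℏ A j u) x + (ℏ : ℂ) * (V x : ℂ) * u x

/-- The L² norm of a function on `ℝ^d` (w.r.t. Lebesgue measure). -/
def l2norm {d : ℕ} (f : Rd d → ℂ) : ℝ :=
  Real.sqrt (∫ x, ‖f x‖ ^ 2)

/-- The gauge function `Φ^{(x₀)}(x₀+Z) = -Σ_j ∫₀¹ A_j(x₀+τZ) Z_j dτ`. -/
def PhiGauge {d : ℕ} (A : Fin d → Rd d → ℝ) (x₀ : Rd d) (x : Rd d) : ℝ :=
  -∑ j, ∫ τ in (0:ℝ)..1, A j (x₀ + τ • (x - x₀)) * (x - x₀) j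

/-- The transverse-gauge potential `A^{(x₀)}_j(x₀+Z) = Σ_k (∫₀¹ B_{kj}(x₀+τZ) τ dτ) Z_k`. -/
def Atrans {d : ℕ} (A : Fin d → Rd d → ℝ) (x₀ : Rd d) (j : Fin d) (x : Rd d) : ℝ :=
  ∑ k, (∫ τ in (0:ℝ)..1, magField A k j (x₀ + τ • (x - x₀)) * τ) * (x - x₀) k

/-!
In the rescaled variable `Z`, the transverse-gauge potential is `a_j(Z) = Σ_k g_{kj}(tZ) Z_k`
with `g_{kj}(y) = ∫₀¹ B_{kj}(x₀ + τy) τ dτ`, and the model potential is the same expression with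
`g_{kj}(0) = B_{kj}(x₀)/2` in place of `g_{kj}(tZ)`. Each `g_{kj}` is Lipschitz with constant
`sup ‖∇B‖ / 3`, so `a_j`, `∂_j a_j` and `V(x₀ + tZ)` differ from their model counterparts by `t`
times a polynomial in `‖Z‖`, uniformly in `x₀`. Expanding `((1/i)∂_j - a_j)²`, the difference of
the two operators applied to `u` is controlled by these differences times `u` and `∇u`, and the
compact support of `u` turns this into `O(t)`.
-/

open intervalIntegral

theorem exists_nonneg_forall_le_of_finite {ι α : Type*} [Finite ι] {f : ι → α → ℝ}
    (h : ∀ i, ∃ C, ∀ x, f i x ≤ C) : ∃ C, 0 ≤ C ∧ ∀ i x, f i x ≤ C := by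
  choose C hC using h
  obtain ⟨M, hM⟩ := Finite.bddAbove_range C
  exact ⟨max M 0, le_max_right _ _, fun i x =>
    ((hC i x).trans (hM ⟨i, rfl⟩)).trans (le_max_left _ _)⟩

section PartialDerivative

variable {d : ℕ} {E : Type*} [NormedAddCommGroup E] [NormedSpace ℝ E]

theorem norm_pd_le (j : Fin d) (f : Rd d → E) (x : Rd d) : ‖pd j f x‖ ≤ ‖fderiv ℝ f x‖ := by
  simpa [pd] using (fderiv ℝ f x).le_opNorm (EuclideanSpace.single j 1)

theorem contDiff_pd {n : WithTop ℕ∞} {f : Rd d → E} (hf : ContDiff ℝ (n + 1) f) (j : Fin d) :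
    ContDiff ℝ n (pd j f) :=
  (hf.fderiv_right le_rfl).clm_apply contDiff_const

theorem pd_sum_mul_coord {c : Fin d → Rd d → ℝ} {W : Rd d}
    (hc : ∀ k, DifferentiableAt ℝ (c k) W) (j : Fin d) :
    pd j (fun W => ∑ k, c k W * W k) W = ∑ k, pd j (c k) W * W k + c j W := by
  have hk : ∀ k, HasFDerivAt (fun W : Rd d => c k W * W k)
      (c k W • EuclideanSpace.proj k + W k • fderiv ℝ (c k) W) W := fun k =>
    (hc k).hasFDerivAt.mul (EuclideanSpace.proj (𝕜 := ℝ) k : Rd d →L[ℝ] ℝ).hasFDerivAt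
  rw [pd, (HasFDerivAt.fun_sum (u := Finset.univ) fun k _ => hk k).fderiv]
  simp [Finset.sum_add_distrib, PiLp.single_apply, pd, mul_comm, add_comm]

theorem norm_sum_mul_coord_le {c : Fin d → ℝ} {K : ℝ} (hc : ∀ k, ‖c k‖ ≤ K) (W : Rd d) :
    ‖∑ k, c k * W k‖ ≤ d * K * ‖W‖ := by
  calc ‖∑ k, c k * W k‖ ≤ ∑ _k : Fin d, K * ‖W‖ := by
        refine (norm_sum_le _ _).trans (Finset.sum_le_sum fun k _ => ?_)
        rw [norm_mul]
        exact mul_le_mul (hc k) (PiLp.norm_apply_le W k) (norm_nonneg _)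
          ((norm_nonneg _).trans (hc k))
    _ = d * K * ‖W‖ := by simp [mul_assoc]

end PartialDerivative

section RadialAverage

variable {E : Type*} [NormedAddCommGroup E] [NormedSpace ℝ E]

def radialAvg (f : E → ℝ) (x₀ y : E) : ℝ :=
  ∫ τ in (0:ℝ)..1, f (x₀ + τ • y) * τ

theorem radialAvg_zero (f : E → ℝ) (x₀ : E) : radialAvg f x₀ 0 = f x₀ / 2 := by
  simp only [radialAvg, smul_zero, add_zero]
  rw [intervalIntegral.integral_const_mul, integral_id]
  ring

variable {f : E → ℝ} {L : ℝ}

theorem norm_radialAvg_sub_le (hf : Differentiable ℝ f) (hL : ∀ x, ‖fderiv ℝ f x‖ ≤ L)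
    (x₀ y y' : E) : ‖radialAvg f x₀ y - radialAvg f x₀ y'‖ ≤ L / 3 * ‖y - y'‖ := by
  have hlip : ∀ p q, ‖f p - f q‖ ≤ L * ‖p - q‖ := fun p q =>
    convex_univ.norm_image_sub_le_of_norm_fderiv_le (fun x _ => hf x) (fun x _ => hL x)
      (Set.mem_univ q) (Set.mem_univ p)
  have hfc : Continuous f := hf.continuous
  have hint : ∀ z : E, IntervalIntegrable (fun τ : ℝ => f (x₀ + τ • z) * τ) volume 0 1 :=
    fun z => (by fun_prop : Continuous fun τ : ℝ => f (x₀ + τ • z) * τ).intervalIntegrable _ _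
  rw [radialAvg, radialAvg, ← integral_sub (hint y) (hint y')]
  calc ‖∫ τ in (0:ℝ)..1, f (x₀ + τ • y) * τ - f (x₀ + τ • y') * τ‖
      ≤ ∫ τ in (0:ℝ)..1, L * ‖y - y'‖ * τ ^ 2 := by
        refine norm_integral_le_of_norm_le zero_le_one ?_
          (Continuous.intervalIntegrable (by fun_prop) _ _)
        refine Eventually.of_forall fun τ hτ => ?_
        have hτ0 : 0 ≤ τ := hτ.1.le
        calc ‖f (x₀ + τ • y) * τ - f (x₀ + τ • y') * τ‖
            = ‖f (x₀ + τ • y) - f (x₀ + τ • y')‖ * τ := by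
              rw [← sub_mul, norm_mul, Real.norm_of_nonneg hτ0]
          _ ≤ L * (τ * ‖y - y'‖) * τ := by
              gcongr
              simpa [← smul_sub, norm_smul, abs_of_nonneg hτ0] using
                hlip (x₀ + τ • y) (x₀ + τ • y')
          _ = L * ‖y - y'‖ * τ ^ 2 := by ring
    _ = L / 3 * ‖y - y'‖ := by
        rw [intervalIntegral.integral_const_mul, integral_pow]
        ring

theorem differentiable_radialAvg (hf : ContDiff ℝ 1 f) (hL : ∀ x, ‖fderiv ℝ f x‖ ≤ L) (x₀ : E) :
    Differentiable ℝ (radialAvg f x₀) := by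
  intro y
  have hf'c : Continuous (fderiv ℝ f) := hf.continuous_fderiv one_ne_zero
  have hfc : Continuous f := hf.continuous
  have hderiv : ∀ τ : ℝ, ∀ z : E, HasFDerivAt (fun y : E => f (x₀ + τ • y) * τ)
      ((τ * τ) • fderiv ℝ f (x₀ + τ • z)) z := fun τ z => by
    refine (((hf.differentiable one_ne_zero (x₀ + τ • z)).hasFDerivAt.comp z
      (((hasFDerivAt_id z).const_smul τ).const_add x₀)).mul_const τ).congr_fderiv ?_
    ext v
    simp only [FunLike.coe_smul, Pi.smul_apply, ContinuousLinearMap.comp_apply,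
      ContinuousLinearMap.id_apply, map_smul, smul_eq_mul]
    ring
  refine (hasFDerivAt_integral_of_dominated_of_fderiv_le (bound := fun _ => L)
    (F' := fun z τ => (τ * τ) • fderiv ℝ f (x₀ + τ • z))
    (Metric.ball_mem_nhds y one_pos) ?_ ?_ ?_ ?_ intervalIntegrable_const ?_).differentiableAt
  · exact Eventually.of_forall fun z => (by fun_prop : Continuous fun τ : ℝ =>
      f (x₀ + τ • z) * τ).aestronglyMeasurable
  · exact (by fun_prop : Continuous fun τ : ℝ => f (x₀ + τ • y) * τ).intervalIntegrable _ _
  · exact (by fun_prop : Continuous fun τ : ℝ =>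
      (τ * τ) • fderiv ℝ f (x₀ + τ • y)).aestronglyMeasurable
  · refine Eventually.of_forall fun τ hτ z _ => ?_
    rw [Set.uIoc_of_le zero_le_one] at hτ
    rw [norm_smul, Real.norm_of_nonneg (mul_self_nonneg τ)]
    exact (mul_le_of_le_one_left (norm_nonneg _) (mul_le_one₀ hτ.2 hτ.1.le hτ.2)).trans (hL _)
  · exact Eventually.of_forall fun τ _ z _ => hderiv τ z

end RadialAverage

section MagneticOperator

variable {d : ℕ} {A : Fin d → Rd d → ℝ} {u : Rd d → ℂ} {Z : Rd d}

theorem magD_magD_eq (j : Fin d) (hA : DifferentiableAt ℝ (A j) Z) (hu : ContDiff ℝ 2 u) :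
    magD 1 A j (magD 1 A j u) Z = -pd j (pd j u) Z + Complex.I * (pd j (A j) Z * u Z)
      + 2 * Complex.I * (A j Z * pd j u Z) + (A j Z : ℂ) ^ 2 * u Z := by
  have hpdu : DifferentiableAt ℝ (pd j u) Z :=
    (contDiff_pd (n := 1) hu j).differentiable one_ne_zero Z
  have hAc : HasFDerivAt (fun x => (A j x : ℂ)) (Complex.ofRealCLM.comp (fderiv ℝ (A j) Z)) Z :=
    Complex.ofRealCLM.hasFDerivAt.comp Z hA.hasFDerivAt
  have hinner : HasFDerivAt (magD 1 A j u) _ Z :=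
    (hpdu.hasFDerivAt.const_mul ((1 : ℝ) / Complex.I)).sub
      (hAc.mul (hu.differentiable two_ne_zero Z).hasFDerivAt)
  have hpd_inner : pd j (magD 1 A j u) Z = -Complex.I * pd j (pd j u) Z
      - (pd j (A j) Z * u Z + A j Z * pd j u Z) := by
    rw [pd, hinner.fderiv]
    simp only [Complex.ofReal_one, one_div, Complex.inv_I, sub_apply, smul_apply, smul_eq_mul,
      neg_mul, add_apply, ContinuousLinearMap.comp_apply, Complex.ofRealCLM_apply, pd,
      sub_right_inj]
    ring
  rw [magD, hpd_inner, magD]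
  simp only [Complex.ofReal_one, one_div, Complex.inv_I]
  ring_nf
  simp only [Complex.I_sq]
  ring

theorem norm_schrodinger_sub_le {a b : Fin d → Rd d → ℝ} {V₁ V₂ : Rd d → ℝ} {δ σ γ v : ℝ}
    (ha : ∀ j, DifferentiableAt ℝ (a j) Z) (hb : ∀ j, DifferentiableAt ℝ (b j) Z)
    (hu : ContDiff ℝ 2 u) (hδ : ∀ j, ‖a j Z - b j Z‖ ≤ δ) (hσ : ∀ j, ‖a j Z‖ + ‖b j Z‖ ≤ σ)
    (hγ : ∀ j, ‖pd j (a j) Z - pd j (b j) Z‖ ≤ γ) (hv : ‖V₁ Z - V₂ Z‖ ≤ v) :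
    ‖schrodinger 1 a V₁ u Z - schrodinger 1 b V₂ u Z‖
      ≤ (d * (γ + δ * σ) + v) * ‖u Z‖ + 2 * d * δ * ‖fderiv ℝ u Z‖ := by
  set T : Fin d → ℂ := fun j =>
    Complex.I * (((pd j (a j) Z - pd j (b j) Z : ℝ) : ℂ) * u Z)
      + 2 * Complex.I * (((a j Z - b j Z : ℝ) : ℂ) * pd j u Z)
      + ((a j Z - b j Z : ℝ) : ℂ) * ((a j Z + b j Z : ℝ) : ℂ) * u Z
  have hdiff : schrodinger 1 a V₁ u Z - schrodinger 1 b V₂ u Z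
      = ∑ j, T j + ((V₁ Z - V₂ Z : ℝ) : ℂ) * u Z := by
    have hj : ∀ j, magD 1 a j (magD 1 a j u) Z - magD 1 b j (magD 1 b j u) Z = T j := by
      intro j
      rw [magD_magD_eq j (ha j) hu, magD_magD_eq j (hb j) hu]
      simp only [T]
      push_cast
      ring
    simp only [schrodinger, ← Finset.sum_congr rfl fun j _ => hj j, Finset.sum_sub_distrib]
    push_cast
    ring
  have hT : ∀ j, ‖T j‖ ≤ γ * ‖u Z‖ + 2 * (δ * ‖fderiv ℝ u Z‖) + δ * σ * ‖u Z‖ := by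
    intro j
    have hδ0 : 0 ≤ δ := (norm_nonneg _).trans (hδ j)
    calc ‖T j‖ ≤ ‖pd j (a j) Z - pd j (b j) Z‖ * ‖u Z‖ + 2 * (‖a j Z - b j Z‖ * ‖pd j u Z‖)
          + ‖a j Z - b j Z‖ * ‖a j Z + b j Z‖ * ‖u Z‖ := by
          refine (norm_add₃_le ..).trans_eq ?_
          simp only [norm_mul, Complex.norm_real, Complex.norm_I, Complex.norm_ofNat, one_mul,
            mul_one]
      _ ≤ _ := by
          gcongr
          exacts [hγ j, hδ j, norm_pd_le j u Z, hδ j, (norm_add_le _ _).trans (hσ j)]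
  calc _ ≤ ∑ j, ‖T j‖ + ‖V₁ Z - V₂ Z‖ * ‖u Z‖ := by
        rw [hdiff]
        refine (norm_add_le _ _).trans (add_le_add (norm_sum_le _ _) ?_)
        rw [norm_mul, Complex.norm_real]
    _ ≤ ∑ _j : Fin d, (γ * ‖u Z‖ + 2 * (δ * ‖fderiv ℝ u Z‖) + δ * σ * ‖u Z‖) + v * ‖u Z‖ := by
        gcongr with j
        exact hT j
    _ = _ := by
        simp only [Finset.sum_const, Finset.card_univ, Fintype.card_fin, nsmul_eq_mul]
        ring

end MagneticOperator

section TransverseGauge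

variable {d : ℕ} {x₀ Z : Rd d} {t L : ℝ}

theorem inv_mul_Atrans_add_smul (A : Fin d → Rd d → ℝ) (j : Fin d) (ht : t ≠ 0) (W : Rd d) :
    t⁻¹ * Atrans A x₀ j (x₀ + t • W) = ∑ k, radialAvg (magField A k j) x₀ (t • W) * W k := by
  simp only [Atrans, radialAvg, add_sub_cancel_left, Finset.mul_sum, PiLp.smul_apply,
    smul_eq_mul]
  refine Finset.sum_congr rfl fun k _ => ?_
  field_simp

theorem norm_pd_radialAvg_smul_le {g : Rd d → ℝ} (hg : Differentiable ℝ g)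
    (hL : ∀ x, ‖fderiv ℝ g x‖ ≤ L) (ht : 0 ≤ t) (j : Fin d) :
    ‖pd j (fun W => radialAvg g x₀ (t • W)) Z‖ ≤ t * (L / 3) := by
  have hL0 : 0 ≤ L := (norm_nonneg _).trans (hL 0)
  refine (norm_pd_le j _ Z).trans (norm_fderiv_le_of_lip' ℝ (by positivity) ?_)
  refine Eventually.of_forall fun W => (norm_radialAvg_sub_le hg hL x₀ _ _).trans_eq ?_
  rw [← smul_sub, norm_smul, Real.norm_of_nonneg ht]
  ring

variable {f : Fin d → Rd d → ℝ}

theorem norm_sum_radialAvg_smul_sub_le (hf : ∀ k, Differentiable ℝ (f k))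
    (hL : ∀ k x, ‖fderiv ℝ (f k) x‖ ≤ L) (ht : 0 ≤ t) :
    ‖∑ k, radialAvg (f k) x₀ (t • Z) * Z k - ∑ k, radialAvg (f k) x₀ 0 * Z k‖
      ≤ t * (d * (L / 3) * ‖Z‖ ^ 2) := by
  rw [← Finset.sum_sub_distrib]
  simp_rw [← sub_mul]
  refine (norm_sum_mul_coord_le (K := L / 3 * (t * ‖Z‖)) (fun k => ?_) Z).trans_eq (by ring)
  simpa [norm_smul, Real.norm_of_nonneg ht] using norm_radialAvg_sub_le (hf k) (hL k) x₀ (t • Z) 0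

theorem norm_pd_sum_radialAvg_smul_sub_le (hf : ∀ k, ContDiff ℝ 1 (f k))
    (hL : ∀ k x, ‖fderiv ℝ (f k) x‖ ≤ L) (ht : 0 ≤ t) (j : Fin d) :
    ‖pd j (fun W => ∑ k, radialAvg (f k) x₀ (t • W) * W k) Z
        - pd j (fun W => ∑ k, radialAvg (f k) x₀ 0 * W k) Z‖
      ≤ t * ((d + 1) * (L / 3) * ‖Z‖) := by
  have hdiff : ∀ k, Differentiable ℝ fun W : Rd d => radialAvg (f k) x₀ (t • W) := fun k =>
    (differentiable_radialAvg (hf k) (hL k) x₀).comp (differentiable_id.const_smul t)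
  rw [pd_sum_mul_coord (fun k => hdiff k Z),
    pd_sum_mul_coord (c := fun k _ => radialAvg (f k) x₀ 0) (fun k => differentiableAt_const _)]
  have hconst : ∀ k, pd j (fun _ => radialAvg (f k) x₀ 0) Z = 0 := fun k => by simp [pd]
  simp only [hconst, zero_mul, Finset.sum_const_zero, zero_add, add_sub_assoc]
  calc _ ≤ d * (t * (L / 3)) * ‖Z‖ + L / 3 * ‖t • Z - 0‖ :=
        (norm_add_le _ _).trans (add_le_add
          (norm_sum_mul_coord_le (fun k => norm_pd_radialAvg_smul_le (hf k |>.differentiable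
            one_ne_zero) (hL k) ht j) Z)
          (norm_radialAvg_sub_le ((hf j).differentiable one_ne_zero) (hL j) x₀ _ _))
    _ = t * ((d + 1) * (L / 3) * ‖Z‖) := by
        rw [sub_zero, norm_smul, Real.norm_of_nonneg ht]
        ring

end TransverseGauge

theorem exists_continuous_bound_rescaled_sub_model {d : ℕ} {A : Fin d → Rd d → ℝ}
    {V : Rd d → ℝ} {M₀ M₁ L_V : ℝ} (hB : ∀ j k, ContDiff ℝ 1 (magField A j k))
    (hM₀ : ∀ j k x, ‖magField A j k x‖ ≤ M₀) (hM₁ : ∀ j k x, ‖fderiv ℝ (magField A j k) x‖ ≤ M₁)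
    (hM₁_nonneg : 0 ≤ M₁) (hV : Differentiable ℝ V) (hL_V : ∀ x, ‖fderiv ℝ V x‖ ≤ L_V) :
    ∃ F : Rd d → ℝ, Continuous F ∧ ∀ u : Rd d → ℂ, ContDiff ℝ 2 u →
      ∀ (x₀ : Rd d), ∀ t ∈ Set.Ioc (0:ℝ) 1, ∀ Z : Rd d,
        ‖schrodinger 1 (fun j W => t⁻¹ * Atrans A x₀ j (x₀ + t • W))
              (fun W => V (x₀ + t • W)) u Z
          - schrodinger 1 (fun j W => (1/2) * ∑ k, magField A k j x₀ * W k)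
              (fun _ => V x₀) u Z‖ ≤ t * (F Z * (‖u Z‖ + ‖fderiv ℝ u Z‖)) := by
  set α : ℝ → ℝ := fun r => d * (M₁ / 3) * r ^ 2
  set c₁ : ℝ → ℝ := fun r =>
    d * ((d + 1) * (M₁ / 3) * r + α r * (α r + d * M₀ * r)) + L_V * r
  set c₂ : ℝ → ℝ := fun r => 2 * d * α r
  refine ⟨fun Z => max (c₁ ‖Z‖) (c₂ ‖Z‖), by fun_prop, fun u hu x₀ t ht Z => ?_⟩
  obtain ⟨ht0, ht1⟩ := ht
  have hpot : (fun j W => t⁻¹ * Atrans A x₀ j (x₀ + t • W))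
      = fun j W => ∑ k, radialAvg (magField A k j) x₀ (t • W) * W k := by
    funext j W
    exact inv_mul_Atrans_add_smul A j ht0.ne' W
  have hmodel : (fun j (W : Rd d) => (1/2) * ∑ k, magField A k j x₀ * W k)
      = fun j W => ∑ k, radialAvg (magField A k j) x₀ 0 * W k := by
    funext j W
    simp only [radialAvg_zero, Finset.mul_sum]
    ring_nf
  have hBd : ∀ j k, Differentiable ℝ (magField A j k) := fun j k =>
    (hB j k).differentiable one_ne_zero
  have hdiff : ∀ j k, Differentiable ℝ (radialAvg (magField A j k) x₀) := fun j k =>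
    differentiable_radialAvg (hB j k) (hM₁ j k) x₀
  have hmodel_le : ∀ j, ‖∑ k, radialAvg (magField A k j) x₀ 0 * Z k‖ ≤ d * (M₀ / 2) * ‖Z‖ :=
    fun j => norm_sum_mul_coord_le (fun k => by
      rw [radialAvg_zero, norm_div, Real.norm_two]
      linarith [hM₀ k j x₀]) Z
  have hδ : ∀ j, ‖∑ k, radialAvg (magField A k j) x₀ (t • Z) * Z k
      - ∑ k, radialAvg (magField A k j) x₀ 0 * Z k‖ ≤ t * α ‖Z‖ := fun j =>
    norm_sum_radialAvg_smul_sub_le (fun k => hBd k j) (fun k => hM₁ k j) ht0.le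
  have hσ : ∀ j, ‖∑ k, radialAvg (magField A k j) x₀ (t • Z) * Z k‖
      + ‖∑ k, radialAvg (magField A k j) x₀ 0 * Z k‖ ≤ α ‖Z‖ + d * M₀ * ‖Z‖ := by
    intro j
    have htα : t * α ‖Z‖ ≤ α ‖Z‖ := mul_le_of_le_one_left (by positivity) ht1
    linarith [norm_le_norm_add_norm_sub' (∑ k, radialAvg (magField A k j) x₀ (t • Z) * Z k)
      (∑ k, radialAvg (magField A k j) x₀ 0 * Z k), hδ j, hmodel_le j]
  have hv : ‖V (x₀ + t • Z) - V x₀‖ ≤ t * (L_V * ‖Z‖) := by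
    refine (convex_univ.norm_image_sub_le_of_norm_fderiv_le (fun x _ => hV x)
      (fun x _ => hL_V x) (Set.mem_univ _) (Set.mem_univ _)).trans_eq ?_
    rw [add_sub_cancel_left, norm_smul, Real.norm_of_nonneg ht0.le]
    ring
  rw [hpot, hmodel]
  calc _ ≤ (d * (t * ((d + 1) * (M₁ / 3) * ‖Z‖) + t * α ‖Z‖ * (α ‖Z‖ + d * M₀ * ‖Z‖))
          + t * (L_V * ‖Z‖)) * ‖u Z‖ + 2 * d * (t * α ‖Z‖) * ‖fderiv ℝ u Z‖ :=
        norm_schrodinger_sub_le (fun j => by fun_prop) (fun j => by fun_prop) hu hδ hσ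
          (fun j => norm_pd_sum_radialAvg_smul_sub_le (fun k => hB k j) (fun k => hM₁ k j)
            ht0.le j) hv
    _ = t * (c₁ ‖Z‖ * ‖u Z‖ + c₂ ‖Z‖ * ‖fderiv ℝ u Z‖) := by ring
    _ ≤ t * (max (c₁ ‖Z‖) (c₂ ‖Z‖) * ‖u Z‖ + max (c₁ ‖Z‖) (c₂ ‖Z‖) * ‖fderiv ℝ u Z‖) := by
        gcongr
        exacts [le_max_left _ _, le_max_right _ _]
    _ = _ := by ring

/-- the rescaled operator `ℋ_{t,x₀}` (in the transverse gauge) converges to the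
model operator `ℋ^{(x₀)}` at rate `O(t)`, uniformly in `x₀` and `Z`. -/
theorem statement19 (d : ℕ) (A : Fin d → Rd d → ℝ) (V : Rd d → ℝ)
    (hA : ∀ j, ContDiff ℝ (⊤ : ℕ∞) (A j)) (hV : ContDiff ℝ (⊤ : ℕ∞) V)
    (hBbdd : ∀ (j k : Fin d) (m : ℕ), ∃ C, ∀ x, ‖iteratedFDeriv ℝ m (magField A j k) x‖ ≤ C)
    (hVbdd : ∀ m : ℕ, ∃ C, ∀ x, ‖iteratedFDeriv ℝ m V x‖ ≤ C)
    (u : Rd d → ℂ) (hu : ContDiff ℝ (⊤ : ℕ∞) u) (hsupp : HasCompactSupport u) :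
    ∃ C > (0:ℝ), ∀ (x₀ : Rd d), ∀ t ∈ Set.Ioc (0:ℝ) 1, ∀ Z : Rd d,
      ‖schrodinger 1 (fun j W => t⁻¹ * Atrans A x₀ j (x₀ + t • W))
            (fun W => V (x₀ + t • W)) u Z
        - schrodinger 1 (fun j W => (1/2) * ∑ k, magField A k j x₀ * W k)
            (fun _ => V x₀) u Z‖ ≤ C * t := by
  have hB : ∀ j k, ContDiff ℝ 1 (magField A j k) := fun j k =>
    (contDiff_pd (contDiff_infty.1 (hA k) 2) j).sub (contDiff_pd (contDiff_infty.1 (hA j) 2) k)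
  obtain ⟨M₀, -, hM₀⟩ := exists_nonneg_forall_le_of_finite (f := fun (p : Fin d × Fin d) x =>
    ‖magField A p.1 p.2 x‖) fun p => by simpa using hBbdd p.1 p.2 0
  obtain ⟨M₁, hM₁_nonneg, hM₁⟩ := exists_nonneg_forall_le_of_finite
    (f := fun (p : Fin d × Fin d) x => ‖fderiv ℝ (magField A p.1 p.2) x‖)
    fun p => by simpa using hBbdd p.1 p.2 1
  obtain ⟨L_V, hL_V⟩ : ∃ L, ∀ x, ‖fderiv ℝ V x‖ ≤ L := by simpa using hVbdd 1
  obtain ⟨F, hF_cont, hF⟩ := exists_continuous_bound_rescaled_sub_model hB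
    (fun j k => hM₀ (j, k)) (fun j k => hM₁ (j, k)) hM₁_nonneg
    ((contDiff_infty.1 hV 1).differentiable one_ne_zero) hL_V
  have hu2 : ContDiff ℝ 2 u := contDiff_infty.1 hu 2
  have hsupp' : HasCompactSupport fun Z => F Z * (‖u Z‖ + ‖fderiv ℝ u Z‖) :=
    (hsupp.norm.add (hsupp.fderiv ℝ).norm).mul_left
  obtain ⟨C, hC⟩ := hsupp'.exists_bound_of_continuous <| hF_cont.mul <|
    hu.continuous.norm.add (hu2.continuous_fderiv two_ne_zero).norm
  refine ⟨max C 1, by positivity, fun x₀ t ht Z => ?_⟩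
  calc _ ≤ t * (F Z * (‖u Z‖ + ‖fderiv ℝ u Z‖)) := hF u hu2 x₀ t ht Z
    _ ≤ t * max C 1 := by
        gcongr
        · exact ht.1.le
        · exact (le_abs_self _).trans ((hC Z).trans (le_max_left _ _))
    _ = max C 1 * t := mul_comm _ _
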